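/- arXiv:2407.01171 — 2 statements merged into one kernel-verified Lean document; each statement's English description precedes it below -/
import Mathlib

section
/- Let (X,Y) be random variables with joint law ρ and marginals μ, ν. Suppose the deflated conditional expectation operator D satisfies ‖D - D_d‖ ≤ σ, where D f(x) = E[f(Y) | X=x] - E[f(Y)]. Then for any measurable sets A, B with P[X∈A] > 0, |P[Y∈B | X∈A] - P[Y∈B] - ⟨𝟙_A, D_d 𝟙_B⟩ / P[X∈A]| ≤ σ · √(P[Y∈B] / P[X∈A]). -/
open MeasureTheory
open scoped RealInnerProductSpace

/-!
The error term is `⟪𝟙_A, (D - D_d) 𝟙_B⟫ / P[X ∈ A]`, by the defining property of `D`.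
Cauchy–Schwarz and the operator norm bound it by `‖D - D_d‖ ‖𝟙_A‖ ‖𝟙_B‖ / P[X ∈ A]`,
and in `L²` the indicator of a set has norm the square root of its measure.
-/

theorem norm_indicatorConstLp_two_one {α : Type*} [MeasurableSpace α] {μ : Measure α}
    {s : Set α} (hs : MeasurableSet s) (hμs : μ s ≠ ⊤) :
    ‖indicatorConstLp 2 hs hμs (1 : ℝ)‖ = Real.sqrt (μ s).toReal := by
  rw [norm_indicatorConstLp two_ne_zero ENNReal.ofNat_ne_top, Real.sqrt_eq_rpow,
    measureReal_def]
  norm_num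

theorem abs_inner_indicatorConstLp_apply_le {𝒳 𝒴 : Type*} [MeasurableSpace 𝒳]
    [MeasurableSpace 𝒴] {μ : Measure 𝒳} {ν : Measure 𝒴} (T : Lp ℝ 2 ν →L[ℝ] Lp ℝ 2 μ)
    {A : Set 𝒳} {B : Set 𝒴} (hA : MeasurableSet A) (hB : MeasurableSet B) (hμA : μ A ≠ ⊤)
    (hνB : ν B ≠ ⊤) :
    |⟪indicatorConstLp 2 hA hμA (1 : ℝ), T (indicatorConstLp 2 hB hνB (1 : ℝ))⟫|
      ≤ ‖T‖ * (Real.sqrt (μ A).toReal * Real.sqrt (ν B).toReal) := by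
  set fA := indicatorConstLp 2 hA hμA (1 : ℝ)
  set fB := indicatorConstLp 2 hB hνB (1 : ℝ)
  calc |⟪fA, T fB⟫| ≤ ‖fA‖ * ‖T fB‖ := abs_real_inner_le_norm _ _
    _ ≤ ‖fA‖ * (‖T‖ * ‖fB‖) := by gcongr; exact T.le_opNorm fB
    _ = ‖T‖ * (Real.sqrt (μ A).toReal * Real.sqrt (ν B).toReal) := by
      rw [norm_indicatorConstLp_two_one, norm_indicatorConstLp_two_one]; ring

theorem Real.mul_sqrt_mul_sqrt_div_self {a b : ℝ} (c : ℝ) (ha : 0 < a) :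
    c * (Real.sqrt a * Real.sqrt b) / a = c * Real.sqrt (b / a) := by
  have hsa : Real.sqrt a * Real.sqrt a = a := Real.mul_self_sqrt ha.le
  rw [Real.sqrt_div' b ha.le]
  field_simp
  linear_combination c * Real.sqrt b * hsa

theorem approximation_bound_general {𝒳 𝒴 : Type*} [MeasurableSpace 𝒳] [MeasurableSpace 𝒴]
    (μ : Measure 𝒳) (ν : Measure 𝒴) (ρ : Measure (𝒳 × 𝒴))
    [IsProbabilityMeasure μ] [IsProbabilityMeasure ν]
    (D Dd : Lp ℝ 2 ν →L[ℝ] Lp ℝ 2 μ) (σ : ℝ)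
    (hD : ∀ (A : Set 𝒳) (B : Set 𝒴) (hA : MeasurableSet A) (hB : MeasurableSet B),
      ⟪(indicatorConstLp 2 hA (measure_ne_top μ A) (1 : ℝ)),
        D (indicatorConstLp 2 hB (measure_ne_top ν B) (1 : ℝ))⟫
        = (ρ (A ×ˢ B)).toReal - (μ A).toReal * (ν B).toReal)
    (hσ : ‖D - Dd‖ ≤ σ)
    (A : Set 𝒳) (B : Set 𝒴) (hA : MeasurableSet A) (hB : MeasurableSet B)
    (hApos : 0 < (μ A).toReal) :
    |(ρ (A ×ˢ B)).toReal / (μ A).toReal - (ν B).toReal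
        - ⟪(indicatorConstLp 2 hA (measure_ne_top μ A) (1 : ℝ)),
            Dd (indicatorConstLp 2 hB (measure_ne_top ν B) (1 : ℝ))⟫ / (μ A).toReal|
      ≤ σ * Real.sqrt ((ν B).toReal / (μ A).toReal) := by
  set fA := indicatorConstLp 2 hA (measure_ne_top μ A) (1 : ℝ)
  set fB := indicatorConstLp 2 hB (measure_ne_top ν B) (1 : ℝ)
  have error_eq : (ρ (A ×ˢ B)).toReal / (μ A).toReal - (ν B).toReal
      - ⟪fA, Dd fB⟫ / (μ A).toReal = ⟪fA, (D - Dd) fB⟫ / (μ A).toReal := by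
    rw [sub_apply, inner_sub_right, hD A B hA hB]
    field_simp
  rw [error_eq, abs_div, abs_of_pos hApos, ← Real.mul_sqrt_mul_sqrt_div_self σ hApos]
  gcongr
  calc |⟪fA, (D - Dd) fB⟫|
      ≤ ‖D - Dd‖ * (Real.sqrt (μ A).toReal * Real.sqrt (ν B).toReal) :=
        abs_inner_indicatorConstLp_apply_le (D - Dd) hA hB _ _
    _ ≤ σ * (Real.sqrt (μ A).toReal * Real.sqrt (ν B).toReal) := by gcongr

/-- Approximation bound (Lemma 1 of the paper). If the deflated conditional expectation
operator `D` (characterized by `⟨𝟙_A, D 𝟙_B⟩ = ρ(A×B) - μ(A)ν(B)`) is approximated by `D_d`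
with `‖D - D_d‖ ≤ σ`, then for measurable `A, B` with `P[X ∈ A] > 0`,
`|P[Y∈B | X∈A] - P[Y∈B] - ⟨𝟙_A, D_d 𝟙_B⟩ / P[X∈A]| ≤ σ √(P[Y∈B]/P[X∈A])`. -/
theorem approximation_bound {𝒳 𝒴 : Type*} [MeasurableSpace 𝒳] [MeasurableSpace 𝒴]
    (μ : Measure 𝒳) (ν : Measure 𝒴) (ρ : Measure (𝒳 × 𝒴))
    [IsProbabilityMeasure μ] [IsProbabilityMeasure ν] [IsProbabilityMeasure ρ]
    (hμ : ρ.map Prod.fst = μ) (hν : ρ.map Prod.snd = ν)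
    (D Dd : Lp ℝ 2 ν →L[ℝ] Lp ℝ 2 μ) (σ : ℝ)
    (hD : ∀ (A : Set 𝒳) (B : Set 𝒴) (hA : MeasurableSet A) (hB : MeasurableSet B),
      ⟪(indicatorConstLp 2 hA (measure_ne_top μ A) (1 : ℝ)),
        D (indicatorConstLp 2 hB (measure_ne_top ν B) (1 : ℝ))⟫
        = (ρ (A ×ˢ B)).toReal - (μ A).toReal * (ν B).toReal)
    (hσ : ‖D - Dd‖ ≤ σ)
    (A : Set 𝒳) (B : Set 𝒴) (hA : MeasurableSet A) (hB : MeasurableSet B)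
    (hApos : 0 < (μ A).toReal) :
    |(ρ (A ×ˢ B)).toReal / (μ A).toReal - (ν B).toReal
        - ⟪(indicatorConstLp 2 hA (measure_ne_top μ A) (1 : ℝ)),
            Dd (indicatorConstLp 2 hB (measure_ne_top ν B) (1 : ℝ))⟫ / (μ A).toReal|
      ≤ σ * Real.sqrt ((ν B).toReal / (μ A).toReal) :=
  approximation_bound_general μ ν ρ D Dd σ hD hσ A B hA hB hApos
end

section
/- Let D : H₂ → H₁ be a compact operator with singular values σ₁ ≥ σ₂ ≥ ... and let A be any bounded operator of rank at most d. Then ‖D - A‖ ≥ σ_{d+1} (operator norm), where σ_{d+1} is the (d+1)-st singular value of D. -/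
/-!
A rank-`d` operator `A` kills some nonzero `w` in the `(d + 1)`-dimensional span of
`v₀, …, v_d`. Expanding `w` in this orthonormal family and applying Bessel's inequality to
`D w` in the family `u` shows `‖D w‖ ≥ σ_d ‖w‖`, and `D w = (D - A) w`.
-/

open scoped RealInnerProductSpace

open Module in
theorem LinearMap.exists_ne_zero_apply_eq_zero_of_rank_lt {K V W : Type*} [DivisionRing K]
    [AddCommGroup V] [Module K V] [FiniteDimensional K V] [AddCommGroup W] [Module K W]
    (f : V →ₗ[K] W) (h : f.rank < finrank K V) : ∃ x ≠ 0, f x = 0 := by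
  by_contra! hker
  have hinj : Function.Injective f :=
    (injective_iff_map_eq_zero f).2 fun x => not_imp_not.1 (hker x)
  rw [LinearMap.rank, ← finrank_eq_rank, LinearMap.finrank_range_of_inj hinj] at h
  exact lt_irrefl _ h

theorem Orthonormal.inner_eq_of_hasSum {𝕜 E ι : Type*} [RCLike 𝕜] [NormedAddCommGroup E]
    [InnerProductSpace 𝕜 E] {u : ι → E} (hu : Orthonormal 𝕜 u) {a : ι → 𝕜} {x : E}
    (hx : HasSum (fun i => a i • u i) x) (j : ι) : inner 𝕜 (u j) x = a j := by
  classical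
  have h := hx.mapL (innerSL 𝕜 (u j))
  simp only [innerSL_apply_apply, inner_smul_right, orthonormal_iff_ite.1 hu, mul_ite, mul_one,
    mul_zero, @eq_comm _ j] at h
  simpa using h.unique (hasSum_single j fun b hb => if_neg hb)

theorem Orthonormal.mul_norm_sum_smul_le_norm {ι H₁ H₂ : Type*} [Fintype ι]
    [NormedAddCommGroup H₁] [InnerProductSpace ℝ H₁]
    [NormedAddCommGroup H₂] [InnerProductSpace ℝ H₂]
    {u : ι → H₁} {v : ι → H₂} (hu : Orthonormal ℝ u) (hv : Orthonormal ℝ v)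
    {σ c : ι → ℝ} {r : ℝ} (hr : 0 ≤ r) (hrσ : ∀ j, r ≤ σ j) {y : H₁}
    (hy : ∀ j, ⟪u j, y⟫ = σ j * c j) : r * ‖∑ j, c j • v j‖ ≤ ‖y‖ := by
  have hnorm : ‖∑ j, c j • v j‖ ^ 2 = ∑ j, c j ^ 2 := by
    rw [← real_inner_self_eq_norm_sq, hv.inner_sum]
    simp [sq]
  have hsq : (r * ‖∑ j, c j • v j‖) ^ 2 ≤ ‖y‖ ^ 2 :=
    calc (r * ‖∑ j, c j • v j‖) ^ 2 = ∑ j, (r * c j) ^ 2 := by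
          rw [mul_pow, hnorm, Finset.mul_sum]
          simp only [mul_pow]
      _ ≤ ∑ j, ⟪u j, y⟫ ^ 2 := Finset.sum_le_sum fun j _ => by
          rw [hy, mul_pow, mul_pow]
          gcongr
          exact hrσ j
      _ ≤ ‖y‖ ^ 2 := by simpa using hu.sum_inner_products_le (s := Finset.univ) y
  exact le_of_pow_le_pow_left₀ two_ne_zero (norm_nonneg _) hsq

-- `σ d` is the `(d + 1)`-st singular value: indices start at `0`.
theorem eckart_young_mirsky_lower_bound_general {H₁ H₂ : Type*}
    [NormedAddCommGroup H₁] [InnerProductSpace ℝ H₁]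
    [NormedAddCommGroup H₂] [InnerProductSpace ℝ H₂]
    (u : ℕ → H₁) (v : ℕ → H₂) (σ : ℕ → ℝ)
    (hu : Orthonormal ℝ u) (hv : Orthonormal ℝ v)
    (hσ : Antitone σ) (hσ0 : ∀ i, 0 ≤ σ i)
    (D : H₂ →L[ℝ] H₁)
    (hsvd : ∀ w : H₂, HasSum (fun i : ℕ => (σ i * ⟪v i, w⟫) • u i) (D w))
    (d : ℕ) (A : H₂ →L[ℝ] H₁)
    (hrank : Module.rank ℝ (LinearMap.range (A : H₂ →ₗ[ℝ] H₁)) ≤ d) :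
    σ d ≤ ‖D - A‖ := by
  have hu' : Orthonormal ℝ fun j : Fin (d + 1) => u j := hu.comp _ Fin.val_injective
  have hv' : Orthonormal ℝ fun j : Fin (d + 1) => v j := hv.comp _ Fin.val_injective
  set T := Fintype.linearCombination ℝ fun j : Fin (d + 1) => v j
  obtain ⟨c, hc, hAc⟩ := ((A : H₂ →ₗ[ℝ] H₁) ∘ₗ T).exists_ne_zero_apply_eq_zero_of_rank_lt <|
    calc ((A : H₂ →ₗ[ℝ] H₁) ∘ₗ T).rank ≤ d := (LinearMap.rank_comp_le_left _ _).trans hrank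
      _ < Module.finrank ℝ (Fin (d + 1) → ℝ) := by simp
  have hw : T c ≠ 0 := mt ((injective_iff_map_eq_zero T).1
    hv'.linearIndependent.fintypeLinearCombination_injective c) hc
  have hstretch : σ d * ‖T c‖ ≤ ‖D (T c)‖ := by
    refine hu'.mul_norm_sum_smul_le_norm hv' (hσ0 d) (fun j => hσ (Fin.is_le j)) fun j => ?_
    rw [hu.inner_eq_of_hasSum (hsvd (T c)) j, Fintype.linearCombination_apply,
      hv'.inner_right_fintype]
  have hbound : ‖D (T c)‖ ≤ ‖D - A‖ * ‖T c‖ := by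
    simpa [show A (T c) = 0 from hAc] using (D - A).le_opNorm (T c)
  exact le_of_mul_le_mul_right (hstretch.trans hbound) (norm_pos_iff.2 hw)

/-- Eckart–Young–Mirsky for compact operators: if `D : H₂ → H₁` has SVD
`D = Σᵢ σᵢ uᵢ ⊗ vᵢ` with nonincreasing nonnegative singular values, and `A` is any
bounded operator of rank at most `d`, then `‖D - A‖ ≥ σ_{d+1}` (0-indexed: `σ d`). -/
theorem eckart_young_mirsky_lower_bound {H₁ H₂ : Type*}
    [NormedAddCommGroup H₁] [InnerProductSpace ℝ H₁] [CompleteSpace H₁]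
    [NormedAddCommGroup H₂] [InnerProductSpace ℝ H₂] [CompleteSpace H₂]
    (u : ℕ → H₁) (v : ℕ → H₂) (σ : ℕ → ℝ)
    (hu : Orthonormal ℝ u) (hv : Orthonormal ℝ v)
    (hσ : Antitone σ) (hσ0 : ∀ i, 0 ≤ σ i)
    (hσlim : Filter.Tendsto σ Filter.atTop (nhds 0))
    (D : H₂ →L[ℝ] H₁)
    (hsvd : ∀ w : H₂, HasSum (fun i : ℕ => (σ i * ⟪v i, w⟫) • u i) (D w))
    (d : ℕ) (A : H₂ →L[ℝ] H₁)
    (hrank : Module.rank ℝ (LinearMap.range (A : H₂ →ₗ[ℝ] H₁)) ≤ d) :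
    σ d ≤ ‖D - A‖ :=
  eckart_young_mirsky_lower_bound_general u v σ hu hv hσ hσ0 D hsvd d A hrank
end
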